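/- arXiv:1611.03224 — 7 statements merged into one kernel-verified Lean document; each statement's English description precedes it below -/
import Mathlib

section
/- If a sequence x in a normed linear space X is I-statistically convergent to ξ with roughness degree r ≥ 0 (i.e., rough I-statistically convergent), then the diameter of the set of all rough I-statistical limits of x is at most 2r. -/
open scoped Classical

/-- `I` is a nontrivial admissible ideal on `ℕ`. -/
def IsAdmissibleIdeal (I : Set (Set ℕ)) : Prop :=
  (∅ : Set ℕ) ∈ I ∧ (Set.univ : Set ℕ) ∉ I ∧
  (∀ A B : Set ℕ, A ∈ I → B ∈ I → A ∪ B ∈ I) ∧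
  (∀ A B : Set ℕ, A ∈ I → B ⊆ A → B ∈ I) ∧
  (∀ n : ℕ, ({n} : Set ℕ) ∈ I)

/-- `(1/n) * |{k ≤ n : P k}|` (indices `k` running over `1,…,n`). -/
noncomputable def stCount (P : ℕ → Prop) (n : ℕ) : ℝ :=
  ((Finset.Icc 1 n).filter P).card / n

/-- `I`-convergence of a real sequence `a` to `L`. -/
def ITendsto (I : Set (Set ℕ)) (a : ℕ → ℝ) (L : ℝ) : Prop :=
  ∀ ε : ℝ, 0 < ε → {n : ℕ | ε ≤ |a n - L|} ∈ I

/-- `ξ` is a rough `I`-statistical limit of `x` with roughness degree `r`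
(the `δ` formulation). -/
def RoughIStatLim {X : Type*} [NormedAddCommGroup X] (I : Set (Set ℕ))
    (x : ℕ → X) (r : ℝ) (ξ : X) : Prop :=
  ∀ ε : ℝ, 0 < ε → ∀ δ : ℝ, 0 < δ →
    {n : ℕ | δ ≤ stCount (fun k => r + ε ≤ ‖x k - ξ‖) n} ∈ I

/-- `ξ` is a rough `I`-statistical limit of `x` with roughness degree `r`
(the `I`-density formulation). -/
def RoughIStatLim' {X : Type*} [NormedAddCommGroup X] (I : Set (Set ℕ))
    (x : ℕ → X) (r : ℝ) (ξ : X) : Prop :=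
  ∀ ε : ℝ, 0 < ε → ITendsto I (stCount (fun k => r + ε ≤ ‖x k - ξ‖)) 0

/-- `x` is `I`-statistically convergent to `ξ`. -/
def IStatConv {X : Type*} [NormedAddCommGroup X] (I : Set (Set ℕ))
    (x : ℕ → X) (ξ : X) : Prop :=
  ∀ ε : ℝ, 0 < ε → ∀ δ : ℝ, 0 < δ →
    {n : ℕ | δ ≤ stCount (fun k => ε ≤ ‖x k - ξ‖) n} ∈ I

/-- `c` is an `I`-statistical cluster point of `x`. -/
def IStatClusterPt {X : Type*} [NormedAddCommGroup X] (I : Set (Set ℕ))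
    (x : ℕ → X) (c : X) : Prop :=
  ∀ ε : ℝ, 0 < ε → ¬ ITendsto I (stCount (fun k => ‖x k - c‖ < ε)) 0

/-- `x` is `I`-statistically bounded. -/
def IStatBounded {X : Type*} [NormedAddCommGroup X] (I : Set (Set ℕ))
    (x : ℕ → X) : Prop :=
  ∃ G : ℝ, 0 < G ∧ ∀ δ : ℝ, 0 < δ →
    {n : ℕ | δ ≤ stCount (fun k => G ≤ ‖x k‖) n} ∈ I

/-!
If `y` and `z` are both rough limits, then for every `ε > 0` the indices `n` at which at least
half of `x₁, …, xₙ` lie outside the ball of radius `r + ε` around `y`, or around `z`, form a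
set in `I`; since `I` is proper, some `n ≥ 1` escapes both.  Then fewer than `n` of
`x₁, …, xₙ` are far from `y` or from `z`, so some `x_k` lies within `r + ε` of both,
and `‖y - z‖ < 2 (r + ε)`.
-/

theorem stCount_or_le (P Q : ℕ → Prop) (n : ℕ) :
    stCount (fun k => P k ∨ Q k) n ≤ stCount P n + stCount Q n := by
  unfold stCount
  rw [← add_div]
  gcongr
  norm_cast
  refine (Finset.card_le_card fun k => ?_).trans (Finset.card_union_le _ _)
  simp only [Finset.mem_filter, Finset.mem_union]
  tauto

theorem stCount_eq_one_of_forall {P : ℕ → Prop} {n : ℕ} (hn : 0 < n) (hP : ∀ k, P k) :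
    stCount P n = 1 := by
  unfold stCount
  rw [Finset.filter_true_of_mem fun k _ => hP k, Nat.card_Icc, Nat.add_sub_cancel]
  exact div_self (by positivity)

theorem exists_not_and_not_of_stCount_add_lt_one {P Q : ℕ → Prop} {n : ℕ} (hn : 0 < n)
    (h : stCount P n + stCount Q n < 1) : ∃ k, ¬P k ∧ ¬Q k := by
  by_contra! hPQ
  have hall : ∀ k, P k ∨ Q k := fun k => or_iff_not_imp_left.2 (hPQ k)
  have := stCount_or_le P Q n
  rw [stCount_eq_one_of_forall hn hall] at this
  linarith

theorem IsAdmissibleIdeal.exists_pos_notMem_union {I : Set (Set ℕ)} (hI : IsAdmissibleIdeal I)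
    {A B : Set ℕ} (hA : A ∈ I) (hB : B ∈ I) : ∃ n, 0 < n ∧ n ∉ A ∧ n ∉ B := by
  obtain ⟨-, huniv, hunion, -, hsing⟩ := hI
  have hproper : A ∪ B ∪ {0} ≠ Set.univ := fun h =>
    huniv (h ▸ hunion _ _ (hunion _ _ hA hB) (hsing 0))
  obtain ⟨n, hn⟩ := (Set.ne_univ_iff_exists_notMem _).1 hproper
  simp only [Set.mem_union, Set.mem_singleton_iff, not_or] at hn
  exact ⟨n, Nat.pos_of_ne_zero hn.2, hn.1⟩

theorem RoughIStatLim.dist_le {X : Type*} [NormedAddCommGroup X] {I : Set (Set ℕ)}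
    (hI : IsAdmissibleIdeal I) {x : ℕ → X} {r : ℝ} {y z : X}
    (hy : RoughIStatLim I x r y) (hz : RoughIStatLim I x r z) : dist y z ≤ 2 * r := by
  refine le_of_forall_pos_lt_add fun ε hε => ?_
  obtain ⟨n, hn, hny, hnz⟩ := hI.exists_pos_notMem_union
    (hy (ε / 2) (half_pos hε) (1 / 2) one_half_pos) (hz (ε / 2) (half_pos hε) (1 / 2) one_half_pos)
  simp only [Set.mem_ofPred_eq, not_le] at hny hnz
  obtain ⟨k, hky, hkz⟩ := exists_not_and_not_of_stCount_add_lt_one hn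
    ((add_lt_add hny hnz).trans_eq (add_halves 1))
  rw [not_le, ← dist_eq_norm] at hky
  rw [not_le, ← dist_eq_norm] at hkz
  linarith [dist_triangle_left y z (x k)]

theorem stmt_0_general {X : Type*} [NormedAddCommGroup X]
    (I : Set (Set ℕ)) (hI : IsAdmissibleIdeal I) (x : ℕ → X) (r : ℝ) (hr : 0 ≤ r) :
    Metric.diam {y : X | RoughIStatLim I x r y} ≤ 2 * r :=
  Metric.diam_le_of_forall_dist_le (by linarith) fun _ hy _ hz => hy.dist_le hI hz

theorem stmt_0 {X : Type*} [NormedAddCommGroup X] [NormedSpace ℝ X]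
    (I : Set (Set ℕ)) (hI : IsAdmissibleIdeal I) (x : ℕ → X) (r : ℝ) (hr : 0 ≤ r)
    (ξ : X) (hx : RoughIStatLim I x r ξ) :
    Metric.diam {y : X | RoughIStatLim I x r y} ≤ 2 * r :=
  stmt_0_general I hI x r hr
end

section
/- If a sequence x in a normed linear space X is I-statistically convergent to ξ, then for every r > 0 the set of rough I-statistical limits of x with roughness degree r has diameter exactly 2r. -/
open scoped Classical

/-! The rough limits of an `I`-statistically convergent sequence are exactly the points of the
closed ball of radius `r` about its limit `ξ`. A point farther than `r` from `ξ` cannot be one: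
for small `ε`, every term is `ε`-far from `ξ` or `(r + ε)`-far from it, so for every `n ≥ 1` one
of the two densities is at least `1/2`, and both exceptional sets lying in `I` would put `ℕ` in
`I`. The diameter of a closed ball of radius `r` is `2r` in any nontrivial real normed space. -/

lemma stCount_mono {P Q : ℕ → Prop} (h : ∀ k, P k → Q k) (n : ℕ) :
    stCount P n ≤ stCount Q n := by
  unfold stCount
  gcongr
  exact h _

lemma one_le_stCount_add {P Q : ℕ → Prop} (h : ∀ k, P k ∨ Q k) {n : ℕ} (hn : n ≠ 0) :
    1 ≤ stCount P n + stCount Q n := by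
  have hcard : n ≤ ((Finset.Icc 1 n).filter P).card + ((Finset.Icc 1 n).filter Q).card := by
    calc n = ((Finset.Icc 1 n).filter fun k => P k ∨ Q k).card := by simp [h]
      _ ≤ _ := by rw [Finset.filter_or]; exact Finset.card_union_le _ _
  have hn' : (0 : ℝ) < n := by positivity
  unfold stCount
  rw [← add_div, le_div_iff₀ hn', one_mul]
  exact_mod_cast hcard

lemma IsAdmissibleIdeal.mem_of_subset {I : Set (Set ℕ)} (hI : IsAdmissibleIdeal I)
    {A B : Set ℕ} (hA : A ∈ I) (hBA : B ⊆ A) : B ∈ I :=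
  hI.2.2.2.1 A B hA hBA

lemma IsAdmissibleIdeal.exists_ne_zero_notMem_union {I : Set (Set ℕ)} (hI : IsAdmissibleIdeal I)
    {A B : Set ℕ} (hA : A ∈ I) (hB : B ∈ I) : ∃ n ≠ 0, n ∉ A ∪ B := by
  obtain ⟨-, huniv, hunion, hdown, hsingle⟩ := hI
  by_contra! h
  refine huniv (hdown _ _ (hunion _ _ (hunion _ _ hA hB) (hsingle 0)) fun n _ => ?_)
  rcases eq_or_ne n 0 with rfl | hn
  · exact Or.inr rfl
  · exact Or.inl (h n hn)

section RoughIStatLim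

variable {X : Type*} [NormedAddCommGroup X] {I : Set (Set ℕ)} {x : ℕ → X}

lemma IStatConv.roughIStatLim_zero {ξ : X} (hx : IStatConv I x ξ) : RoughIStatLim I x 0 ξ := by
  intro ε hε δ hδ
  simpa only [zero_add] using hx ε hε δ hδ

lemma RoughIStatLim.of_norm_sub_le (hI : IsAdmissibleIdeal I) {r s : ℝ} {ξ y : X}
    (hξ : RoughIStatLim I x r ξ) (hy : ‖y - ξ‖ ≤ s) : RoughIStatLim I x (r + s) y := by
  intro ε hε δ hδ
  refine hI.mem_of_subset (hξ ε hε δ hδ) fun n hn => le_trans hn (stCount_mono (fun k hk => ?_) n)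
  have := norm_sub_le_norm_sub_add_norm_sub (x k) ξ y
  rw [norm_sub_rev] at hy
  linarith

lemma RoughIStatLim.norm_sub_le (hI : IsAdmissibleIdeal I) {r s : ℝ} {ξ y : X}
    (hy : RoughIStatLim I x r y) (hξ : RoughIStatLim I x s ξ) : ‖y - ξ‖ ≤ r + s := by
  by_contra! hfar
  obtain ⟨ε, hε, hgap⟩ : ∃ ε > 0, ‖y - ξ‖ = r + s + 2 * ε :=
    ⟨(‖y - ξ‖ - (r + s)) / 2, by linarith, by ring⟩
  have hsplit : ∀ k, r + ε ≤ ‖x k - y‖ ∨ s + ε ≤ ‖x k - ξ‖ := by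
    intro k
    by_contra! hnear
    have := norm_sub_le_norm_sub_add_norm_sub y (x k) ξ
    rw [norm_sub_rev y (x k)] at this
    linarith [hnear.1, hnear.2]
  obtain ⟨n, hn, hnA⟩ :=
    hI.exists_ne_zero_notMem_union (hy ε hε (1 / 2) one_half_pos) (hξ ε hε (1 / 2) one_half_pos)
  simp only [Set.mem_union, Set.mem_ofPred_eq, not_or, not_le] at hnA
  linarith [one_le_stCount_add hsplit hn]

theorem IStatConv.setOf_roughIStatLim_eq_closedBall (hI : IsAdmissibleIdeal I) {ξ : X}
    (hx : IStatConv I x ξ) (r : ℝ) : {y : X | RoughIStatLim I x r y} = Metric.closedBall ξ r := by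
  ext y
  rw [Set.mem_ofPred_eq, Metric.mem_closedBall, dist_eq_norm]
  constructor
  · intro hy
    simpa only [add_zero] using hy.norm_sub_le hI hx.roughIStatLim_zero
  · intro hy
    simpa only [zero_add] using hx.roughIStatLim_zero.of_norm_sub_le hI hy

end RoughIStatLim

theorem stmt_2 {X : Type*} [NormedAddCommGroup X] [NormedSpace ℝ X] [Nontrivial X]
    (I : Set (Set ℕ)) (hI : IsAdmissibleIdeal I) (x : ℕ → X) (ξ : X)
    (hx : IStatConv I x ξ) (r : ℝ) (hr : 0 < r) :
    Metric.diam {y : X | RoughIStatLim I x r y} = 2 * r := by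
  rw [hx.setOf_roughIStatLim_eq_closedBall hI r, Metric.diam_closedBall_eq ξ hr.le]
end

section
/- For any sequence x in a normed linear space X and any r > 0, the set of rough I-statistical limits of x with roughness degree r is a closed subset of X. -/
open scoped Classical

theorem isClosed_setOf_roughIStatLim {X : Type*} [NormedAddCommGroup X] {I : Set (Set ℕ)}
    (hI : ∀ A B : Set ℕ, A ∈ I → B ⊆ A → B ∈ I) (x : ℕ → X) (r : ℝ) :
    IsClosed {ξ : X | RoughIStatLim I x r ξ} := by
  refine isClosed_of_closure_subset fun ξ hξ ε hε δ hδ => ?_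
  obtain ⟨ξ', hξ', hdist⟩ := Metric.mem_closure_iff.mp hξ (ε / 2) (half_pos hε)
  refine hI _ _ (hξ' (ε / 2) (half_pos hε) δ hδ) fun n hn =>
    hn.trans (stCount_mono (fun k hk => ?_) n)
  have htri := norm_sub_le_norm_sub_add_norm_sub (x k) ξ' ξ
  rw [dist_eq_norm'] at hdist
  linarith

theorem stmt_4_general {X : Type*} [NormedAddCommGroup X]
    (I : Set (Set ℕ)) (hI : IsAdmissibleIdeal I) (x : ℕ → X) (r : ℝ) :
    IsClosed {ξ : X | RoughIStatLim I x r ξ} :=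
  isClosed_setOf_roughIStatLim hI.2.2.2.1 x r

theorem stmt_4 {X : Type*} [NormedAddCommGroup X] [NormedSpace ℝ X]
    (I : Set (Set ℕ)) (hI : IsAdmissibleIdeal I) (x : ℕ → X) (r : ℝ) (hr : 0 < r) :
    IsClosed {ξ : X | RoughIStatLim I x r ξ} :=
  stmt_4_general I hI x r
end

section
/- For any sequence x in a normed linear space X and any r > 0, the set of rough I-statistical limits of x with roughness degree r is a convex subset of X. -/
open scoped Classical

lemma stCount_le_add {P Q R : ℕ → Prop} (h : ∀ k, P k → Q k ∨ R k) (n : ℕ) :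
    stCount P n ≤ stCount Q n + stCount R n := by
  unfold stCount
  rw [← add_div]
  gcongr
  calc (((Finset.Icc 1 n).filter P).card : ℝ)
      ≤ (((Finset.Icc 1 n).filter Q ∪ (Finset.Icc 1 n).filter R).card : ℝ) := by
        rw [← Finset.filter_or]
        exact_mod_cast Finset.card_le_card (Finset.monotone_filter_right _ fun k _ => h k)
    _ ≤ _ := by exact_mod_cast Finset.card_union_le _ _

lemma stCount_ge_subset_union {P Q R : ℕ → Prop} (h : ∀ k, P k → Q k ∨ R k) (δ : ℝ) :
    {n | δ ≤ stCount P n} ⊆ {n | δ / 2 ≤ stCount Q n} ∪ {n | δ / 2 ≤ stCount R n} := by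
  intro n hn
  by_contra hnot
  simp only [Set.mem_union, Set.mem_ofPred_eq, not_or, not_le] at hn hnot
  linarith [stCount_le_add h n]

lemma le_norm_sub_or_of_le_norm_sub_convexComb {X : Type*} [SeminormedAddCommGroup X]
    [NormedSpace ℝ X] {y ξ₀ ξ₁ : X} {a b c : ℝ} (ha : 0 ≤ a) (hb : 0 ≤ b) (hab : a + b = 1)
    (h : c ≤ ‖y - (a • ξ₀ + b • ξ₁)‖) : c ≤ ‖y - ξ₀‖ ∨ c ≤ ‖y - ξ₁‖ := by
  by_contra! ⟨hnear₀, hnear₁⟩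
  have hmem := convex_ball y c (x := ξ₀) (y := ξ₁)
    (by rwa [mem_ball_iff_norm']) (by rwa [mem_ball_iff_norm']) ha hb hab
  rw [mem_ball_iff_norm'] at hmem
  exact h.not_gt hmem

theorem stmt_5_general {X : Type*} [NormedAddCommGroup X] [NormedSpace ℝ X]
    (I : Set (Set ℕ)) (hI : IsAdmissibleIdeal I) (x : ℕ → X) (r : ℝ) :
    Convex ℝ {ξ : X | RoughIStatLim I x r ξ} := by
  obtain ⟨-, -, hunion, hsubset, -⟩ := hI
  intro ξ₀ h₀ ξ₁ h₁ a b ha hb hab ε hε δ hδ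
  exact hsubset _ _ (hunion _ _ (h₀ ε hε (δ / 2) (by linarith)) (h₁ ε hε (δ / 2) (by linarith)))
    (stCount_ge_subset_union
      (fun k => le_norm_sub_or_of_le_norm_sub_convexComb ha hb hab) δ)

theorem stmt_5 {X : Type*} [NormedAddCommGroup X] [NormedSpace ℝ X]
    (I : Set (Set ℕ)) (hI : IsAdmissibleIdeal I) (x : ℕ → X) (r : ℝ) (hr : 0 < r) :
    Convex ℝ {ξ : X | RoughIStatLim I x r ξ} :=
  stmt_5_general I hI x r
end

section
/- Let r > 0 and let x be a sequence in a normed linear space X. Then x is rough I-statistically convergent to ξ with degree r if and only if there exists a sequence y in X such that y is I-statistically convergent to ξ and ‖x_k − y_k‖ ≤ r for all k ∈ ℕ. -/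
open scoped Classical

lemma stCount_ge_mem_of_imp {I : Set (Set ℕ)} (hI : ∀ A B : Set ℕ, A ∈ I → B ⊆ A → B ∈ I)
    {P Q : ℕ → Prop} (h : ∀ k, Q k → P k) {δ : ℝ} (hP : {n | δ ≤ stCount P n} ∈ I) :
    {n | δ ≤ stCount Q n} ∈ I :=
  hI _ _ hP fun n hn => hn.trans (stCount_mono h n)

section StepToward

variable {X : Type*} [NormedAddCommGroup X] [NormedSpace ℝ X]

noncomputable def stepToward (ξ : X) (r : ℝ) (v : X) : X :=
  if ‖v - ξ‖ ≤ r then ξ else v + (r / ‖v - ξ‖) • (ξ - v)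

lemma norm_sub_stepToward_le {r : ℝ} (hr : 0 ≤ r) (ξ v : X) :
    ‖v - stepToward ξ r v‖ ≤ r := by
  unfold stepToward
  split_ifs with h
  · exact h
  · have hd : 0 < ‖v - ξ‖ := hr.trans_lt (not_le.mp h)
    rw [sub_add_cancel_left, norm_neg, norm_smul, norm_sub_rev ξ, Real.norm_of_nonneg
      (div_nonneg hr hd.le), div_mul_cancel₀ _ hd.ne']

lemma norm_stepToward_sub {r : ℝ} (hr : 0 ≤ r) (ξ v : X) :
    ‖stepToward ξ r v - ξ‖ = max (‖v - ξ‖ - r) 0 := by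
  unfold stepToward
  split_ifs with h
  · simp [h]
  · have hlt : r < ‖v - ξ‖ := not_le.mp h
    have hd : 0 < ‖v - ξ‖ := hr.trans_lt hlt
    have hcoef : 0 ≤ 1 - r / ‖v - ξ‖ := by
      rw [sub_nonneg, div_le_one hd]; exact hlt.le
    have hrepr : v + (r / ‖v - ξ‖) • (ξ - v) - ξ = (1 - r / ‖v - ξ‖) • (v - ξ) := by module
    rw [hrepr, norm_smul, Real.norm_of_nonneg hcoef, sub_mul, one_mul,
      div_mul_cancel₀ _ hd.ne', max_eq_left (by linarith)]

end StepToward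

theorem stmt_6 {X : Type*} [NormedAddCommGroup X] [NormedSpace ℝ X]
    (I : Set (Set ℕ)) (hI : IsAdmissibleIdeal I) (x : ℕ → X) (r : ℝ) (hr : 0 < r)
    (ξ : X) :
    RoughIStatLim I x r ξ ↔
      ∃ y : ℕ → X, IStatConv I y ξ ∧ ∀ k : ℕ, ‖x k - y k‖ ≤ r := by
  obtain ⟨-, -, -, hdown, -⟩ := hI
  constructor
  · intro hx
    refine ⟨fun k => stepToward ξ r (x k), fun ε hε δ hδ => ?_,
      fun k => norm_sub_stepToward_le hr.le ξ (x k)⟩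
    refine stCount_ge_mem_of_imp hdown (fun k hk => ?_) (hx ε hε δ hδ)
    rw [norm_stepToward_sub hr.le] at hk
    have := (le_max_iff.mp hk).resolve_right hε.not_ge
    linarith
  · rintro ⟨y, hy, hnear⟩ ε hε δ hδ
    refine stCount_ge_mem_of_imp hdown (fun k hk => ?_) (hy ε hε δ hδ)
    linarith [norm_sub_le_norm_sub_add_norm_sub (x k) (y k) ξ, hnear k]
end

section
/- A sequence x in a normed linear space X is I-statistically bounded if and only if there exists r > 0 such that the rough I-statistical limit set of x with degree r is nonempty. -/
open scoped Classical

lemma setOf_le_stCount_mem_of_imp {I : Set (Set ℕ)}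
    (hI : ∀ A B : Set ℕ, A ∈ I → B ⊆ A → B ∈ I) {P Q : ℕ → Prop} (h : ∀ k, P k → Q k)
    {δ : ℝ} (hQ : {n : ℕ | δ ≤ stCount Q n} ∈ I) : {n : ℕ | δ ≤ stCount P n} ∈ I :=
  hI _ _ hQ fun _ hn => le_trans hn (stCount_mono h _)

theorem stmt_9_general {X : Type*} [NormedAddCommGroup X]
    (I : Set (Set ℕ)) (hI : IsAdmissibleIdeal I) (x : ℕ → X) :
    IStatBounded I x ↔ ∃ r : ℝ, 0 < r ∧ ∃ ξ : X, RoughIStatLim I x r ξ := by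
  have hered := hI.2.2.2.1
  constructor
  · rintro ⟨G, hG, hGI⟩
    refine ⟨G, hG, 0, fun ε hε δ hδ =>
      setOf_le_stCount_mem_of_imp hered (fun k hk => ?_) (hGI δ hδ)⟩
    rw [sub_zero] at hk
    linarith
  · rintro ⟨r, hr, ξ, hξ⟩
    refine ⟨r + 1 + ‖ξ‖, by positivity, fun δ hδ =>
      setOf_le_stCount_mem_of_imp hered (fun k hk => ?_) (hξ 1 one_pos δ hδ)⟩
    linarith [norm_sub_norm_le (x k) ξ]

theorem stmt_9 {X : Type*} [NormedAddCommGroup X] [NormedSpace ℝ X]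
    (I : Set (Set ℕ)) (hI : IsAdmissibleIdeal I) (x : ℕ → X) :
    IStatBounded I x ↔ ∃ r : ℝ, 0 < r ∧ ∃ ξ : X, RoughIStatLim I x r ξ :=
  stmt_9_general I hI x
end

section
/- Let x be the real sequence defined by x_k = (−1)^k for k ∉ A and x_k = k for k ∈ A, where A ∈ I is an infinite set with I-natural density zero. Then for r ≥ 1, the interval [1 − r, r − 1] is contained in the rough I-statistical limit set of x with degree r. -/
open scoped Classical

/-!
Off `A` the sequence takes only the values `±1`, which lie within `1 + |ξ| ≤ r` of any
`ξ ∈ [1 - r, r - 1]`. So for every `ε > 0` the indices with `|x k - ξ| ≥ r + ε` all lie in `A`,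
and their density is dominated by that of `A`, which `I`-converges to `0`.
-/

lemma stCount_nonneg (P : ℕ → Prop) (n : ℕ) : 0 ≤ stCount P n := by
  unfold stCount
  positivity

lemma ITendsto.setOf_le_stCount_mem {I : Set (Set ℕ)} {P : ℕ → Prop}
    (h : ITendsto I (stCount P) 0) {δ : ℝ} (hδ : 0 < δ) :
    {n | δ ≤ stCount P n} ∈ I := by
  simpa only [sub_zero, abs_of_nonneg (stCount_nonneg P _)] using h δ hδ

lemma roughIStatLim_of_forall_mem {X : Type*} [NormedAddCommGroup X] {I : Set (Set ℕ)}
    (hI : IsAdmissibleIdeal I) {A : Set ℕ} (hd : ITendsto I (stCount (· ∈ A)) 0)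
    {x : ℕ → X} {r : ℝ} {ξ : X} (hA : ∀ ε > 0, ∀ k, r + ε ≤ ‖x k - ξ‖ → k ∈ A) :
    RoughIStatLim I x r ξ := fun ε hε _ hδ =>
  hI.mem_of_subset (hd.setOf_le_stCount_mem hδ) fun _ hn =>
    hn.trans (stCount_mono (hA ε hε) _)

lemma abs_neg_one_pow_sub_le (k : ℕ) (ξ : ℝ) : |(-1 : ℝ) ^ k - ξ| ≤ 1 + |ξ| :=
  calc |(-1 : ℝ) ^ k - ξ| ≤ |(-1 : ℝ) ^ k| + |ξ| := abs_sub _ _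
    _ = 1 + |ξ| := by rw [abs_pow, abs_neg, abs_one, one_pow]

theorem stmt_16_general (I : Set (Set ℕ)) (hI : IsAdmissibleIdeal I) (A : Set ℕ)
    (hd : ITendsto I (stCount (fun k => k ∈ A)) 0)
    (x : ℕ → ℝ) (hx : ∀ k : ℕ, x k = if k ∈ A then (k : ℝ) else (-1 : ℝ) ^ k)
    (r : ℝ) :
    ∀ ξ ∈ Set.Icc (1 - r) (r - 1), RoughIStatLim I x r ξ := by
  rintro ξ ⟨hξ₁, hξ₂⟩
  refine roughIStatLim_of_forall_mem hI hd fun ε hε k hk => ?_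
  by_contra hkA
  have hξ : |ξ| ≤ r - 1 := abs_le.mpr ⟨by linarith, hξ₂⟩
  rw [hx k, if_neg hkA, Real.norm_eq_abs] at hk
  linarith [abs_neg_one_pow_sub_le k ξ]

theorem stmt_16 (I : Set (Set ℕ)) (hI : IsAdmissibleIdeal I) (A : Set ℕ)
    (hA : A ∈ I) (hAinf : A.Infinite)
    (hd : ITendsto I (stCount (fun k => k ∈ A)) 0)
    (x : ℕ → ℝ) (hx : ∀ k : ℕ, x k = if k ∈ A then (k : ℝ) else (-1 : ℝ) ^ k)
    (r : ℝ) (hr : 1 ≤ r) :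
    ∀ ξ ∈ Set.Icc (1 - r) (r - 1), RoughIStatLim I x r ξ :=
  stmt_16_general I hI A hd x hx r
end
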